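/- Let n ≥ 1, let A : ℝⁿ → ℝⁿ, V : ℝⁿ → ℝ, ψ : ℝⁿ → ℝ be smooth, let a, b : ℝ × ℝⁿ → ℂ be smooth, and let λ > 0. Assume the eikonal equation |∇ψ(x)|² = 1 for all x, the transport equation ∂ₛa + ⟨∇ψ, ∇ₓa⟩ + (1/2) a Δψ = 0 everywhere, and the transport equation ∂ₛb + ⟨∇ψ, ∇ₓb⟩ − i (A·∇ψ) b = 0 everywhere. Define u(t,x) = a(2λt, x) b(2λt, x) e^{iλ(ψ(x) − λt)}. Then for all (t,x): i ∂ₜu(t,x) + H_{A,V}( u(t,·) )(x) = e^{iλ(ψ(x) − λt)} · H_{A,V}( (a b)(2λt, ·) )(x). In particular the remainder R = −(i∂ₜ + H_{A,V})u is of order zero in λ. -/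

import Mathlib

/-- Partial derivative `∂ⱼ` of a complex-valued function on `ℝⁿ`. -/
noncomputable def pdC {n : ℕ} (j : Fin n) (u : (Fin n → ℝ) → ℂ) (x : Fin n → ℝ) : ℂ :=
  fderiv ℝ u x (Pi.single j 1)

/-- Partial derivative `∂ⱼ` of a real-valued function on `ℝⁿ`. -/
noncomputable def pdR {n : ℕ} (j : Fin n) (f : (Fin n → ℝ) → ℝ) (x : Fin n → ℝ) : ℝ :=
  fderiv ℝ f x (Pi.single j 1)

/-- The magnetic Schrödinger operator
`H_{A,V} u = Δu − 2i A·∇u − i (div A) u − |A|² u + V u` on Euclidean `ℝⁿ`. -/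
noncomputable def magOp {n : ℕ} (A : (Fin n → ℝ) → (Fin n → ℝ)) (V : (Fin n → ℝ) → ℝ)
    (u : (Fin n → ℝ) → ℂ) (x : Fin n → ℝ) : ℂ :=
  (∑ j, pdC j (pdC j u) x)
    - 2 * Complex.I * ∑ j, (A x j : ℂ) * pdC j u x
    - Complex.I * ((∑ j, pdR j (fun y => A y j) x : ℝ) : ℂ) * u x
    - ((∑ j, (A x j) ^ 2 : ℝ) : ℂ) * u x
    + (V x : ℂ) * u x

lemma pdC_add {n : ℕ} (j : Fin n) {f g : (Fin n → ℝ) → ℂ} {x} (hf : DifferentiableAt ℝ f x)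
    (hg : DifferentiableAt ℝ g x) :
    pdC j (fun y => f y + g y) x = pdC j f x + pdC j g x := by
  simp [pdC, fderiv_fun_add hf hg]

lemma pdC_mul {n : ℕ} (j : Fin n) {f g : (Fin n → ℝ) → ℂ} {x} (hf : DifferentiableAt ℝ f x)
    (hg : DifferentiableAt ℝ g x) :
    pdC j (fun y => f y * g y) x = pdC j f x * g x + f x * pdC j g x := by
  simp [pdC, fderiv_fun_mul hf hg]; ring

lemma pdC_const_mul {n : ℕ} (j : Fin n) {f : (Fin n → ℝ) → ℂ} {x} (k : ℂ)
    (hf : DifferentiableAt ℝ f x) :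
    pdC j (fun y => k * f y) x = k * pdC j f x := by
  simp [pdC, fderiv_const_mul hf k]

lemma pdC_ofReal {n : ℕ} (j : Fin n) {f : (Fin n → ℝ) → ℝ} {x} (hf : DifferentiableAt ℝ f x) :
    pdC j (fun y => ((f y : ℝ) : ℂ)) x = ((pdR j f x : ℝ) : ℂ) := by
  have h : HasFDerivAt (fun y => ((f y : ℝ) : ℂ)) (Complex.ofRealCLM.comp (fderiv ℝ f x)) x :=
    Complex.ofRealCLM.hasFDerivAt.comp x hf.hasFDerivAt
  simp [pdC, pdR, h.fderiv]

lemma pdC_cexp {n : ℕ} (j : Fin n) {f : (Fin n → ℝ) → ℂ} {x} (hf : DifferentiableAt ℝ f x) :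
    pdC j (fun y => Complex.exp (f y)) x = Complex.exp (f x) * pdC j f x := by
  have h := hf.hasFDerivAt.cexp
  simp [pdC, h.fderiv]

lemma pdC_contDiff {n : ℕ} (j : Fin n) {f : (Fin n → ℝ) → ℂ} (hf : ContDiff ℝ (⊤ : ℕ∞) f) :
    ContDiff ℝ (⊤ : ℕ∞) (pdC j f) := by
  unfold pdC
  exact (hf.fderiv_right (m := (⊤ : ℕ∞)) (by simp)).clm_apply contDiff_const

lemma pdR_contDiff {n : ℕ} (j : Fin n) {f : (Fin n → ℝ) → ℝ} (hf : ContDiff ℝ (⊤ : ℕ∞) f) :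
    ContDiff ℝ (⊤ : ℕ∞) (pdR j f) := by
  unfold pdR
  exact (hf.fderiv_right (m := (⊤ : ℕ∞)) (by simp)).clm_apply contDiff_const

lemma pdR_const_mul {n : ℕ} (j : Fin n) {f : (Fin n → ℝ) → ℝ} {x} (k : ℝ)
    (hf : DifferentiableAt ℝ f x) :
    pdR j (fun y => k * f y) x = k * pdR j f x := by
  simp [pdR, fderiv_const_mul hf k]

/-- WKB cancellation.  Assume the eikonal equation `|∇ψ|² = 1` and the
two transport equations for `a` and `b`.  Then, with
`u (t,x) = a (2λt, x) b (2λt, x) e^{iλ(ψ(x) − λt)}`,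
`i ∂ₜu + H_{A,V} u = e^{iλ(ψ − λt)} · H_{A,V}((ab)(2λt, ·))` pointwise: the remainder is
of order zero in `λ`. -/
theorem wkb_cancellation (n : ℕ) (hn : 1 ≤ n)
    (A : (Fin n → ℝ) → (Fin n → ℝ)) (V ψ : (Fin n → ℝ) → ℝ)
    (a b : ℝ × (Fin n → ℝ) → ℂ) (lam : ℝ)
    (hA : ContDiff ℝ (⊤ : ℕ∞) A) (hV : ContDiff ℝ (⊤ : ℕ∞) V) (hψ : ContDiff ℝ (⊤ : ℕ∞) ψ)
    (ha : ContDiff ℝ (⊤ : ℕ∞) a) (hb : ContDiff ℝ (⊤ : ℕ∞) b) (hlam : 0 < lam)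
    (heik : ∀ x : Fin n → ℝ, ∑ j, (pdR j ψ x) ^ 2 = 1)
    (hta : ∀ (s : ℝ) (x : Fin n → ℝ),
      deriv (fun s' : ℝ => a (s', x)) s
        + ∑ j, ((pdR j ψ x : ℝ) : ℂ) * pdC j (fun y => a (s, y)) x
        + (1/2) * a (s, x) * ((∑ j, pdR j (pdR j ψ) x : ℝ) : ℂ) = 0)
    (htb : ∀ (s : ℝ) (x : Fin n → ℝ),
      deriv (fun s' : ℝ => b (s', x)) s
        + ∑ j, ((pdR j ψ x : ℝ) : ℂ) * pdC j (fun y => b (s, y)) x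
        - Complex.I * ((∑ j, A x j * pdR j ψ x : ℝ) : ℂ) * b (s, x) = 0)
    (t : ℝ) (x : Fin n → ℝ) :
    Complex.I * deriv (fun t' : ℝ => a (2 * lam * t', x) * b (2 * lam * t', x)
        * Complex.exp (Complex.I * ((lam * (ψ x - lam * t') : ℝ) : ℂ))) t
      + magOp A V (fun y => a (2 * lam * t, y) * b (2 * lam * t, y)
        * Complex.exp (Complex.I * ((lam * (ψ y - lam * t) : ℝ) : ℂ))) x
    = Complex.exp (Complex.I * ((lam * (ψ x - lam * t) : ℝ) : ℂ)) *
        magOp A V (fun y => a (2 * lam * t, y) * b (2 * lam * t, y)) x := by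
  -- basic smoothness facts
  have haS : ContDiff ℝ (⊤ : ℕ∞) (fun y : Fin n → ℝ => a (2 * lam * t, y)) :=
    ha.comp (contDiff_const.prodMk contDiff_id)
  have hbS : ContDiff ℝ (⊤ : ℕ∞) (fun y : Fin n → ℝ => b (2 * lam * t, y)) :=
    hb.comp (contDiff_const.prodMk contDiff_id)
  have hCd : ContDiff ℝ (⊤ : ℕ∞) (fun y : Fin n → ℝ => a (2 * lam * t, y) * b (2 * lam * t, y)) :=
    haS.mul hbS
  have hCdiff : Differentiable ℝ (fun y : Fin n → ℝ => a (2 * lam * t, y) * b (2 * lam * t, y)) :=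
    hCd.differentiable (by simp)
  have haSd : Differentiable ℝ (fun y : Fin n → ℝ => a (2 * lam * t, y)) := haS.differentiable (by simp)
  have hbSd : Differentiable ℝ (fun y : Fin n → ℝ => b (2 * lam * t, y)) := hbS.differentiable (by simp)
  have hψd : Differentiable ℝ ψ := hψ.differentiable (by simp)
  have hrd : ContDiff ℝ (⊤ : ℕ∞) (fun y : Fin n → ℝ => lam * (ψ y - lam * t)) :=
    contDiff_const.mul (hψ.sub contDiff_const)
  have hmd : ContDiff ℝ (⊤ : ℕ∞) (fun y : Fin n → ℝ => Complex.I * ((lam * (ψ y - lam * t) : ℝ) : ℂ)) :=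
    contDiff_const.mul (Complex.ofRealCLM.contDiff.comp hrd)
  have hEd : ContDiff ℝ (⊤ : ℕ∞)
      (fun y : Fin n → ℝ => Complex.exp (Complex.I * ((lam * (ψ y - lam * t) : ℝ) : ℂ))) :=
    hmd.cexp
  have hEdiff : Differentiable ℝ
      (fun y : Fin n → ℝ => Complex.exp (Complex.I * ((lam * (ψ y - lam * t) : ℝ) : ℂ))) :=
    hEd.differentiable (by simp)
  have hpψ : ∀ j : Fin n, Differentiable ℝ (pdR j ψ) :=
    fun j => (pdR_contDiff j hψ).differentiable (by simp)
  have hpP : ∀ j : Fin n, Differentiable ℝ (fun y => ((lam * pdR j ψ y : ℝ) : ℂ)) := by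
    intro j
    exact ((Complex.ofRealCLM.contDiff.comp
      (contDiff_const.mul (pdR_contDiff j hψ))).differentiable (by simp) : _)
  -- derivative of the phase in direction j
  have hr : ∀ (j : Fin n) (y : Fin n → ℝ),
      pdR j (fun y' => lam * (ψ y' - lam * t)) y = lam * pdR j ψ y := by
    intro j y
    calc pdR j (fun y' => lam * (ψ y' - lam * t)) y
        = lam * pdR j (fun y' => ψ y' - lam * t) y :=
          pdR_const_mul j lam ((hψd y).sub_const _)
      _ = lam * pdR j ψ y := by
          congr 1
          simp only [pdR]
          rw [fderiv_sub_const]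
  have hr2 : ∀ j : Fin n,
      pdR j (fun y => lam * pdR j ψ y) x = lam * pdR j (pdR j ψ) x :=
    fun j => pdR_const_mul j lam (hpψ j x)
  -- derivative of the exponential factor
  have hE1 : ∀ (j : Fin n) (y : Fin n → ℝ),
      pdC j (fun z => Complex.exp (Complex.I * ((lam * (ψ z - lam * t) : ℝ) : ℂ))) y
        = Complex.exp (Complex.I * ((lam * (ψ y - lam * t) : ℝ) : ℂ))
            * (Complex.I * ((lam * pdR j ψ y : ℝ) : ℂ)) := by
    intro j y
    calc pdC j (fun z => Complex.exp (Complex.I * ((lam * (ψ z - lam * t) : ℝ) : ℂ))) y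
        = Complex.exp (Complex.I * ((lam * (ψ y - lam * t) : ℝ) : ℂ))
            * pdC j (fun z => Complex.I * ((lam * (ψ z - lam * t) : ℝ) : ℂ)) y :=
          pdC_cexp j ((hmd.differentiable (by simp)) y)
      _ = Complex.exp (Complex.I * ((lam * (ψ y - lam * t) : ℝ) : ℂ))
            * (Complex.I * pdC j (fun z => ((lam * (ψ z - lam * t) : ℝ) : ℂ)) y) := by
          congr 1
          exact pdC_const_mul j Complex.I
            (((Complex.ofRealCLM.contDiff.comp hrd).differentiable (by simp)) y)
      _ = Complex.exp (Complex.I * ((lam * (ψ y - lam * t) : ℝ) : ℂ))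
            * (Complex.I * ((pdR j (fun y' => lam * (ψ y' - lam * t)) y : ℝ) : ℂ)) := by
          congr 2
          exact pdC_ofReal j ((hrd.differentiable (by simp)) y)
      _ = Complex.exp (Complex.I * ((lam * (ψ y - lam * t) : ℝ) : ℂ))
            * (Complex.I * ((lam * pdR j ψ y : ℝ) : ℂ)) := by rw [hr j y]
  -- first spatial derivative of u
  have hU1 : ∀ (j : Fin n) (y : Fin n → ℝ),
      pdC j (fun y' => a (2 * lam * t, y') * b (2 * lam * t, y')
          * Complex.exp (Complex.I * ((lam * (ψ y' - lam * t) : ℝ) : ℂ))) y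
        = pdC j (fun y' => a (2 * lam * t, y') * b (2 * lam * t, y')) y
            * Complex.exp (Complex.I * ((lam * (ψ y - lam * t) : ℝ) : ℂ))
          + a (2 * lam * t, y) * b (2 * lam * t, y)
            * (Complex.I * ((lam * pdR j ψ y : ℝ) : ℂ))
            * Complex.exp (Complex.I * ((lam * (ψ y - lam * t) : ℝ) : ℂ)) := by
    intro j y
    have h0 : pdC j (fun y' => a (2 * lam * t, y') * b (2 * lam * t, y')
        * Complex.exp (Complex.I * ((lam * (ψ y' - lam * t) : ℝ) : ℂ))) y
        = pdC j (fun y' => a (2 * lam * t, y') * b (2 * lam * t, y')) y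
            * Complex.exp (Complex.I * ((lam * (ψ y - lam * t) : ℝ) : ℂ))
          + a (2 * lam * t, y) * b (2 * lam * t, y)
            * pdC j (fun z => Complex.exp (Complex.I * ((lam * (ψ z - lam * t) : ℝ) : ℂ))) y :=
      pdC_mul j (hCdiff y) (hEdiff y)
    rw [h0, hE1 j y]; ring

  -- pdC of the product ab
  have hC1x : ∀ j : Fin n,
      pdC j (fun y' => a (2 * lam * t, y') * b (2 * lam * t, y')) x
        = pdC j (fun y => a (2 * lam * t, y)) x * b (2 * lam * t, x)
          + a (2 * lam * t, x) * pdC j (fun y => b (2 * lam * t, y)) x :=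
    fun j => pdC_mul j (haSd x) (hbSd x)
  -- second spatial derivative of u
  have hU2 : ∀ j : Fin n,
      pdC j (pdC j (fun y' => a (2 * lam * t, y') * b (2 * lam * t, y')
          * Complex.exp (Complex.I * ((lam * (ψ y' - lam * t) : ℝ) : ℂ)))) x
        = pdC j (pdC j (fun y' => a (2 * lam * t, y') * b (2 * lam * t, y'))) x
              * Complex.exp (Complex.I * ((lam * (ψ x - lam * t) : ℝ) : ℂ))
          + 2 * Complex.I * (lam : ℂ)
              * Complex.exp (Complex.I * ((lam * (ψ x - lam * t) : ℝ) : ℂ))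
              * b (2 * lam * t, x)
              * (((pdR j ψ x : ℝ) : ℂ) * pdC j (fun y => a (2 * lam * t, y)) x)
          + 2 * Complex.I * (lam : ℂ)
              * Complex.exp (Complex.I * ((lam * (ψ x - lam * t) : ℝ) : ℂ))
              * a (2 * lam * t, x)
              * (((pdR j ψ x : ℝ) : ℂ) * pdC j (fun y => b (2 * lam * t, y)) x)
          + Complex.I * (lam : ℂ) * a (2 * lam * t, x) * b (2 * lam * t, x)
              * Complex.exp (Complex.I * ((lam * (ψ x - lam * t) : ℝ) : ℂ))
              * ((pdR j (pdR j ψ) x : ℝ) : ℂ)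
          - (lam : ℂ) ^ 2 * a (2 * lam * t, x) * b (2 * lam * t, x)
              * Complex.exp (Complex.I * ((lam * (ψ x - lam * t) : ℝ) : ℂ))
              * ((pdR j ψ x : ℝ) : ℂ) ^ 2 := by
    intro j
    have dpC : Differentiable ℝ (pdC j (fun y' => a (2 * lam * t, y') * b (2 * lam * t, y'))) :=
      (pdC_contDiff j hCd).differentiable (by simp)
    have dPI : Differentiable ℝ (fun y => Complex.I * ((lam * pdR j ψ y : ℝ) : ℂ)) :=
      (hpP j).const_mul Complex.I
    have e1 : pdC j (fun y' => a (2 * lam * t, y') * b (2 * lam * t, y')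
          * Complex.exp (Complex.I * ((lam * (ψ y' - lam * t) : ℝ) : ℂ)))
        = fun y => pdC j (fun y' => a (2 * lam * t, y') * b (2 * lam * t, y')) y
              * Complex.exp (Complex.I * ((lam * (ψ y - lam * t) : ℝ) : ℂ))
            + a (2 * lam * t, y) * b (2 * lam * t, y)
              * (Complex.I * ((lam * pdR j ψ y : ℝ) : ℂ))
              * Complex.exp (Complex.I * ((lam * (ψ y - lam * t) : ℝ) : ℂ)) := funext (hU1 j)
    have p0 : pdC j (fun y => pdC j (fun y' => a (2 * lam * t, y') * b (2 * lam * t, y')) y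
              * Complex.exp (Complex.I * ((lam * (ψ y - lam * t) : ℝ) : ℂ))
            + a (2 * lam * t, y) * b (2 * lam * t, y)
              * (Complex.I * ((lam * pdR j ψ y : ℝ) : ℂ))
              * Complex.exp (Complex.I * ((lam * (ψ y - lam * t) : ℝ) : ℂ))) x
        = pdC j (fun y => pdC j (fun y' => a (2 * lam * t, y') * b (2 * lam * t, y')) y
              * Complex.exp (Complex.I * ((lam * (ψ y - lam * t) : ℝ) : ℂ))) x
          + pdC j (fun y => a (2 * lam * t, y) * b (2 * lam * t, y)
              * (Complex.I * ((lam * pdR j ψ y : ℝ) : ℂ))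
              * Complex.exp (Complex.I * ((lam * (ψ y - lam * t) : ℝ) : ℂ))) x :=
      pdC_add j ((dpC.mul hEdiff) x) (((hCdiff.mul dPI).mul hEdiff) x)
    have p1 : pdC j (fun y => pdC j (fun y' => a (2 * lam * t, y') * b (2 * lam * t, y')) y
              * Complex.exp (Complex.I * ((lam * (ψ y - lam * t) : ℝ) : ℂ))) x
        = pdC j (pdC j (fun y' => a (2 * lam * t, y') * b (2 * lam * t, y'))) x
              * Complex.exp (Complex.I * ((lam * (ψ x - lam * t) : ℝ) : ℂ))
          + pdC j (fun y' => a (2 * lam * t, y') * b (2 * lam * t, y')) x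
              * pdC j (fun z => Complex.exp (Complex.I * ((lam * (ψ z - lam * t) : ℝ) : ℂ))) x :=
      pdC_mul j (dpC x) (hEdiff x)
    have p2 : pdC j (fun y => a (2 * lam * t, y) * b (2 * lam * t, y)
              * (Complex.I * ((lam * pdR j ψ y : ℝ) : ℂ))
              * Complex.exp (Complex.I * ((lam * (ψ y - lam * t) : ℝ) : ℂ))) x
        = pdC j (fun y => a (2 * lam * t, y) * b (2 * lam * t, y)
              * (Complex.I * ((lam * pdR j ψ y : ℝ) : ℂ))) x
              * Complex.exp (Complex.I * ((lam * (ψ x - lam * t) : ℝ) : ℂ))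
          + a (2 * lam * t, x) * b (2 * lam * t, x)
              * (Complex.I * ((lam * pdR j ψ x : ℝ) : ℂ))
              * pdC j (fun z => Complex.exp (Complex.I * ((lam * (ψ z - lam * t) : ℝ) : ℂ))) x :=
      pdC_mul j ((hCdiff.mul dPI) x) (hEdiff x)
    have p3 : pdC j (fun y => a (2 * lam * t, y) * b (2 * lam * t, y)
              * (Complex.I * ((lam * pdR j ψ y : ℝ) : ℂ))) x
        = pdC j (fun y' => a (2 * lam * t, y') * b (2 * lam * t, y')) x
              * (Complex.I * ((lam * pdR j ψ x : ℝ) : ℂ))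
          + a (2 * lam * t, x) * b (2 * lam * t, x)
              * pdC j (fun y => Complex.I * ((lam * pdR j ψ y : ℝ) : ℂ)) x :=
      pdC_mul j (hCdiff x) (dPI x)
    have p4 : pdC j (fun y => Complex.I * ((lam * pdR j ψ y : ℝ) : ℂ)) x
        = Complex.I * ((lam * pdR j (pdR j ψ) x : ℝ) : ℂ) := by
      have q1 : pdC j (fun y => Complex.I * ((lam * pdR j ψ y : ℝ) : ℂ)) x
          = Complex.I * pdC j (fun y => ((lam * pdR j ψ y : ℝ) : ℂ)) x :=
        pdC_const_mul j Complex.I ((hpP j) x)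
      have q2 : pdC j (fun y => ((lam * pdR j ψ y : ℝ) : ℂ)) x
          = ((pdR j (fun y => lam * pdR j ψ y) x : ℝ) : ℂ) :=
        pdC_ofReal j ((contDiff_const.mul (pdR_contDiff j hψ)).differentiable (by simp) x)
      rw [q1, q2, hr2 j]
    rw [e1, p0, p1, p2, p3, p4, hE1 j x, hC1x j]
    push_cast
    linear_combination ((lam : ℂ) ^ 2 * ((pdR j ψ x : ℝ) : ℂ) ^ 2 * a (2 * lam * t, x)
      * b (2 * lam * t, x) * Complex.exp (Complex.I * ((lam : ℂ) * ((ψ x : ℂ) - (lam : ℂ) * (t : ℂ))))) * Complex.I_sq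
  -- the Laplacian sum
  have hsum2 : (∑ j, pdC j (pdC j (fun y' => a (2 * lam * t, y') * b (2 * lam * t, y')
          * Complex.exp (Complex.I * ((lam * (ψ y' - lam * t) : ℝ) : ℂ)))) x)
      = (∑ j, pdC j (pdC j (fun y' => a (2 * lam * t, y') * b (2 * lam * t, y'))) x)
            * Complex.exp (Complex.I * ((lam * (ψ x - lam * t) : ℝ) : ℂ))
        + 2 * Complex.I * (lam : ℂ)
            * Complex.exp (Complex.I * ((lam * (ψ x - lam * t) : ℝ) : ℂ)) * b (2 * lam * t, x)
            * (∑ j, ((pdR j ψ x : ℝ) : ℂ) * pdC j (fun y => a (2 * lam * t, y)) x)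
        + 2 * Complex.I * (lam : ℂ)
            * Complex.exp (Complex.I * ((lam * (ψ x - lam * t) : ℝ) : ℂ)) * a (2 * lam * t, x)
            * (∑ j, ((pdR j ψ x : ℝ) : ℂ) * pdC j (fun y => b (2 * lam * t, y)) x)
        + Complex.I * (lam : ℂ) * a (2 * lam * t, x) * b (2 * lam * t, x)
            * Complex.exp (Complex.I * ((lam * (ψ x - lam * t) : ℝ) : ℂ))
            * ((∑ j, pdR j (pdR j ψ) x : ℝ) : ℂ)
        - (lam : ℂ) ^ 2 * a (2 * lam * t, x) * b (2 * lam * t, x)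
            * Complex.exp (Complex.I * ((lam * (ψ x - lam * t) : ℝ) : ℂ))
            * ((∑ j, (pdR j ψ x) ^ 2 : ℝ) : ℂ) := by
    rw [Finset.sum_congr rfl (fun j _ => hU2 j)]
    simp only [Finset.sum_add_distrib, Finset.sum_sub_distrib, ← Finset.sum_mul, ← Finset.mul_sum]
    push_cast
    ring
  -- the A·∇ sum
  have hsumA : (∑ j, (A x j : ℂ) * pdC j (fun y' => a (2 * lam * t, y') * b (2 * lam * t, y')
          * Complex.exp (Complex.I * ((lam * (ψ y' - lam * t) : ℝ) : ℂ))) x)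
      = Complex.exp (Complex.I * ((lam * (ψ x - lam * t) : ℝ) : ℂ))
            * (∑ j, (A x j : ℂ) * pdC j (fun y' => a (2 * lam * t, y') * b (2 * lam * t, y')) x)
        + Complex.I * (lam : ℂ) * a (2 * lam * t, x) * b (2 * lam * t, x)
            * Complex.exp (Complex.I * ((lam * (ψ x - lam * t) : ℝ) : ℂ))
            * ((∑ j, A x j * pdR j ψ x : ℝ) : ℂ) := by
    have hAj : ∀ j : Fin n, (A x j : ℂ) * pdC j (fun y' => a (2 * lam * t, y')
            * b (2 * lam * t, y')
            * Complex.exp (Complex.I * ((lam * (ψ y' - lam * t) : ℝ) : ℂ))) x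
          = (A x j : ℂ) * pdC j (fun y' => a (2 * lam * t, y') * b (2 * lam * t, y')) x
              * Complex.exp (Complex.I * ((lam * (ψ x - lam * t) : ℝ) : ℂ))
            + (Complex.I * (lam : ℂ) * a (2 * lam * t, x) * b (2 * lam * t, x)
              * Complex.exp (Complex.I * ((lam * (ψ x - lam * t) : ℝ) : ℂ)))
              * ((A x j : ℂ) * ((pdR j ψ x : ℝ) : ℂ)) := by
      intro j
      rw [hU1 j x]
      push_cast
      ring
    rw [Finset.sum_congr rfl (fun j _ => hAj j)]
    simp only [Finset.sum_add_distrib, ← Finset.sum_mul, ← Finset.mul_sum]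
    push_cast
    ring
  -- time derivative
  have hax : Differentiable ℝ (fun s' : ℝ => a (s', x)) :=
    (ha.comp (contDiff_id.prodMk contDiff_const)).differentiable (by simp)
  have hbx : Differentiable ℝ (fun s' : ℝ => b (s', x)) :=
    (hb.comp (contDiff_id.prodMk contDiff_const)).differentiable (by simp)
  have hlin : HasDerivAt (fun t' : ℝ => 2 * lam * t') (2 * lam) t := by
    simpa using (hasDerivAt_id t).const_mul (2 * lam)
  have h1 : HasDerivAt (fun t' : ℝ => a (2 * lam * t', x))
      ((2 * lam) • deriv (fun s' : ℝ => a (s', x)) (2 * lam * t)) t :=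
    ((hax _).hasDerivAt).scomp t hlin
  have h2 : HasDerivAt (fun t' : ℝ => b (2 * lam * t', x))
      ((2 * lam) • deriv (fun s' : ℝ => b (s', x)) (2 * lam * t)) t :=
    ((hbx _).hasDerivAt).scomp t hlin
  have hr1 : HasDerivAt (fun t' : ℝ => lam * (ψ x - lam * t')) (lam * -lam) t := by
    have h' : HasDerivAt (fun t' : ℝ => ψ x - lam * t') (-lam) t := by
      simpa using ((hasDerivAt_id t).const_mul lam).const_sub (ψ x)
    simpa using h'.const_mul lam
  have h3 : HasDerivAt
      (fun t' : ℝ => Complex.exp (Complex.I * ((lam * (ψ x - lam * t') : ℝ) : ℂ)))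
      (Complex.exp (Complex.I * ((lam * (ψ x - lam * t) : ℝ) : ℂ))
        * (Complex.I * ((lam * -lam : ℝ) : ℂ))) t :=
    (hr1.ofReal_comp.const_mul Complex.I).cexp
  have hDt : deriv (fun t' : ℝ => a (2 * lam * t', x) * b (2 * lam * t', x)
        * Complex.exp (Complex.I * ((lam * (ψ x - lam * t') : ℝ) : ℂ))) t
      = ((2 * lam) • deriv (fun s' : ℝ => a (s', x)) (2 * lam * t) * b (2 * lam * t, x)
          + a (2 * lam * t, x) * ((2 * lam) • deriv (fun s' : ℝ => b (s', x)) (2 * lam * t)))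
          * Complex.exp (Complex.I * ((lam * (ψ x - lam * t) : ℝ) : ℂ))
        + a (2 * lam * t, x) * b (2 * lam * t, x)
          * (Complex.exp (Complex.I * ((lam * (ψ x - lam * t) : ℝ) : ℂ))
            * (Complex.I * ((lam * -lam : ℝ) : ℂ))) :=
    ((h1.mul h2).mul h3).deriv
  simp only [Complex.real_smul] at hDt
  have hta' := hta (2 * lam * t) x
  have htb' := htb (2 * lam * t) x
  have heik' : ((∑ j, (pdR j ψ x) ^ 2 : ℝ) : ℂ) = 1 := by
    rw [heik x]; norm_num
  simp only [magOp]
  push_cast at hDt hsum2 hsumA hta' htb' heik' ⊢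
  linear_combination Complex.I * hDt + hsum2 - 2 * Complex.I * hsumA
    + (2 * Complex.I * (lam : ℂ)
        * Complex.exp (Complex.I * ((lam : ℂ) * ((ψ x : ℂ) - (lam : ℂ) * (t : ℂ))))
        * b (2 * lam * t, x)) * hta'
    + (2 * Complex.I * (lam : ℂ)
        * Complex.exp (Complex.I * ((lam : ℂ) * ((ψ x : ℂ) - (lam : ℂ) * (t : ℂ))))
        * a (2 * lam * t, x)) * htb'
    - ((lam : ℂ) ^ 2 * a (2 * lam * t, x) * b (2 * lam * t, x)
        * Complex.exp (Complex.I * ((lam : ℂ) * ((ψ x : ℂ) - (lam : ℂ) * (t : ℂ))))) * heik'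
    - ((lam : ℂ) ^ 2 * a (2 * lam * t, x) * b (2 * lam * t, x)
        * Complex.exp (Complex.I * ((lam : ℂ) * ((ψ x : ℂ) - (lam : ℂ) * (t : ℂ))))) * Complex.I_sq
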